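/- For k ≥ 1 define x_k = 2^(−k!) and B_k = (2^(−(k+1)!/2) + 2^(−2·k!)) / (2^(−k!) − 2^(−(k+1)!)) in ℝ. Then: (a) the quasi-Newton iteration identity x_k² + B_k·(x_{k+1} − x_k) + √(x_{k+1}) = 0 holds for every k ≥ 1 (i.e., the sequence (x_k) solves the scheme 0 ∈ g(x_k) + B_k(x_{k+1} − x_k) + F(x_{k+1}) with g(x) = x² and F(x) = |x|^(1/2)); (b) B_k → 0 = g′(0) as k → ∞; (c) x_{k+1}/x_k² → 0 as k → ∞, so the convergence rate of (x_k) to the solution x̄ = 0 exceeds q = 2. -/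

import Mathlib

open Filter

/-- The iterates `x_k = 2^(-k!)` of Example 5.2. -/
noncomputable def xseq (k : ℕ) : ℝ := (2 : ℝ) ^ (-(Nat.factorial k : ℝ))

/-- The quasi-Newton multipliers `B_k` of Example 5.2. -/
noncomputable def Bseq (k : ℕ) : ℝ :=
  ((2 : ℝ) ^ (-(Nat.factorial (k + 1) : ℝ) / 2) +
      (2 : ℝ) ^ (-(2 * (Nat.factorial k : ℝ)))) /
    ((2 : ℝ) ^ (-(Nat.factorial k : ℝ)) - (2 : ℝ) ^ (-(Nat.factorial (k + 1) : ℝ)))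

/-! Since `(k + 1)! = (k + 1) · k!`, the iterates satisfy `x_{k+1} = x_k ^ (k + 1)`, and
`B_k = (√x_{k+1} + x_k²) / (x_k - x_{k+1})` is exactly the multiplier that makes the quasi-Newton
step land on `x_{k+1}`. For `k ≥ 3` this gives `√x_{k+1} ≤ x_k²` and `x_k - x_{k+1} ≥ x_k / 2`,
hence `0 ≤ B_k ≤ 4 x_k`, and `x_{k+1} / x_k² = x_k ^ (k - 1) ≤ x_k`; both bounds tend to `0`
with `x_k`. -/

lemma abs_rpow_half_add_sq_div_sub_le {a b : ℝ} (ha : 0 < a) (ha_le : a ≤ 1 / 2)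
    (hb : |b| ≤ a ^ 4) : (|b| ^ ((1 : ℝ) / 2) + a ^ 2) / (a - b) ≤ 4 * a := by
  have hsqrt : |b| ^ ((1 : ℝ) / 2) ≤ a ^ 2 := by
    rw [← Real.sqrt_eq_rpow, ← Real.sqrt_sq (by positivity : 0 ≤ a ^ 2)]
    exact Real.sqrt_le_sqrt (by linarith)
  have ha4 : a ^ 4 ≤ a / 2 := by
    have : a ^ 3 ≤ (1 / 2) ^ 3 := pow_le_pow_left₀ ha.le ha_le 3
    nlinarith
  have hden : a / 2 ≤ a - b := by linarith [le_abs_self b]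
  rw [div_le_iff₀ (by linarith)]
  nlinarith

lemma pow_div_sq_le_self {a : ℝ} (ha : 0 < a) (ha_le : a ≤ 1) {n : ℕ} (hn : 3 ≤ n) :
    a ^ n / a ^ 2 ≤ a := by
  rw [div_le_iff₀ (by positivity), ← pow_succ']
  exact pow_le_pow_of_le_one ha.le ha_le hn

lemma xseq_pos (k : ℕ) : 0 < xseq k := Real.rpow_pos_of_pos two_pos _

lemma xseq_le_half (k : ℕ) : xseq k ≤ 1 / 2 := by
  have hk : (1 : ℝ) ≤ k.factorial := by exact_mod_cast k.factorial_pos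
  calc xseq k ≤ (2 : ℝ) ^ (-1 : ℝ) := Real.rpow_le_rpow_of_exponent_le one_le_two (by linarith)
    _ = 1 / 2 := by norm_num

lemma xseq_succ (k : ℕ) : xseq (k + 1) = xseq k ^ (k + 1) := by
  rw [xseq, xseq, ← Real.rpow_natCast, ← Real.rpow_mul zero_le_two]
  push_cast [Nat.factorial_succ]
  ring_nf

lemma xseq_succ_lt {k : ℕ} (hk : 1 ≤ k) : xseq (k + 1) < xseq k := by
  rw [xseq_succ]
  exact pow_lt_self_of_lt_one₀ (xseq_pos k) (by linarith [xseq_le_half k]) (by omega)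

lemma tendsto_xseq : Tendsto xseq atTop (nhds 0) := by
  have hfac : Tendsto (fun k : ℕ => (k.factorial : ℝ)) atTop atTop :=
    tendsto_natCast_atTop_atTop.comp (tendsto_atTop_mono Nat.self_le_factorial tendsto_id)
  exact (tendsto_rpow_atBot_of_base_gt_one 2 one_lt_two).comp
    (tendsto_neg_atTop_atBot.comp hfac)

lemma Bseq_eq (k : ℕ) :
    Bseq k = (|xseq (k + 1)| ^ ((1 : ℝ) / 2) + xseq k ^ 2) / (xseq k - xseq (k + 1)) := by
  have hsqrt : |xseq (k + 1)| ^ ((1 : ℝ) / 2) = (2 : ℝ) ^ (-((k + 1).factorial : ℝ) / 2) := by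
    rw [abs_of_pos (xseq_pos _), xseq, ← Real.rpow_mul zero_le_two]
    ring_nf
  have hsq : xseq k ^ 2 = (2 : ℝ) ^ (-(2 * (k.factorial : ℝ))) := by
    rw [xseq, ← Real.rpow_natCast, ← Real.rpow_mul zero_le_two]
    push_cast
    ring_nf
  rw [hsqrt, hsq, Bseq, xseq, xseq]

/-- the sequence `x_k = 2^(-k!)` solves the quasi-Newton scheme
`0 = g(x_k) + B_k (x_{k+1} - x_k) + F(x_{k+1})` for `g(x) = x²`,
`F(x) = |x|^(1/2)`; moreover `B_k → 0 = g'(0)` and `x_{k+1}/x_k² → 0`, i.e. the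
convergence rate to the solution `x̄ = 0` exceeds `q = 2`. -/
theorem quasi_newton_example :
    (∀ k : ℕ, 1 ≤ k →
      (xseq k) ^ 2 + Bseq k * (xseq (k + 1) - xseq k) +
        |xseq (k + 1)| ^ ((1 : ℝ) / 2) = 0) ∧
    Tendsto Bseq atTop (nhds 0) ∧
    Tendsto (fun k => xseq (k + 1) / (xseq k) ^ 2) atTop (nhds 0) := by
  have hx_le_one (k : ℕ) : xseq k ≤ 1 := by linarith [xseq_le_half k]
  refine ⟨fun k hk => ?_, ?_, ?_⟩
  · have hden : xseq k - xseq (k + 1) ≠ 0 := (sub_pos.2 (xseq_succ_lt hk)).ne'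
    rw [Bseq_eq]
    field_simp
    ring
  · refine squeeze_zero' ?_ ?_ (by simpa using tendsto_xseq.const_mul 4)
    · filter_upwards [eventually_ge_atTop 1] with k hk
      rw [Bseq_eq]
      exact div_nonneg (by positivity) (sub_pos.2 (xseq_succ_lt hk)).le
    · filter_upwards [eventually_ge_atTop 3] with k hk
      refine Bseq_eq k ▸ abs_rpow_half_add_sq_div_sub_le (xseq_pos k) (xseq_le_half k) ?_
      rw [abs_of_pos (xseq_pos _), xseq_succ]
      exact pow_le_pow_of_le_one (xseq_pos k).le (hx_le_one k) (by omega)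
  · refine squeeze_zero' (Eventually.of_forall fun k =>
      (div_pos (xseq_pos _) (pow_pos (xseq_pos k) 2)).le) ?_ tendsto_xseq
    filter_upwards [eventually_ge_atTop 2] with k hk
    rw [xseq_succ]
    exact pow_div_sq_le_self (xseq_pos k) (hx_le_one k) (by omega)
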